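/- arXiv:1804.02550 — 8 statements merged into one kernel-verified Lean document; each statement's English description precedes it below -/
import Mathlib

section
/- In the Knödel graph W_{Δ,n} with bipartition U = {u_1,...,u_{n/2}} and V = {v_1,...,v_{n/2}}, two vertices u_i and u_j (i ≠ j) have a common neighbor if and only if id(u_i,u_j) ∈ M_Δ or n/2 - id(u_i,u_j) ∈ M_Δ, where M_Δ = {2^a - 2^b : 0 ≤ b < a < Δ} and id(u_i,u_j) = min{|i-j|, n/2 - |i-j|}. -/
/-- The Knödel graph `W_{Δ,n}` with `m = n/2`: bipartite graph on `U ⊕ V`,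
where `u_i` (as `Sum.inl i`, indices mod `m`) is adjacent to `v_j` (`Sum.inr j`)
iff `j ≡ i + 2^k - 1 (mod m)` for some `k < Δ`. -/
def knodel (Δ m : ℕ) : SimpleGraph (ZMod m ⊕ ZMod m) where
  Adj x y := match x, y with
    | Sum.inl i, Sum.inr j => ∃ k, k < Δ ∧ j = i + 2 ^ k - 1
    | Sum.inr j, Sum.inl i => ∃ k, k < Δ ∧ j = i + 2 ^ k - 1
    | _, _ => False
  symm := ⟨by rintro (i | i) (j | j) h <;> exact h⟩
  loopless := ⟨by rintro (i | i) h <;> exact h⟩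

/-- `D` is a dominating set of `G`: every vertex not in `D` has a neighbor in `D`. -/
def IsDominatingSet {V : Type*} (G : SimpleGraph V) (D : Set V) : Prop :=
  ∀ v ∉ D, ∃ u ∈ D, G.Adj u v

/-- The domination number: minimum cardinality of a (finite) dominating set. -/
noncomputable def dominationNumber {V : Type*} (G : SimpleGraph V) : ℕ :=
  sInf {k | ∃ D : Set V, D.Finite ∧ D.ncard = k ∧ IsDominatingSet G D}

/-- Index-distance of `u_i` and `u_j`: `min(|i-j|, m - |i-j|)`. -/
def idDist (m i j : ℕ) : ℕ :=
  min ((i : ℤ) - (j : ℤ)).natAbs (m - ((i : ℤ) - (j : ℤ)).natAbs)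

/-- `M_Δ = {2^a - 2^b : 0 ≤ b < a < Δ}`. -/
def Mset (Δ : ℕ) : Set ℕ := {d | ∃ a b : ℕ, b < a ∧ a < Δ ∧ d = 2 ^ a - 2 ^ b}

/-!
A common neighbour of `u_i` and `u_j` is a vertex `v_{i + 2^k - 1} = v_{j + 2^l - 1}`, so one
exists iff `i - j ≡ 2^l - 2^k (mod m)`, `m = n/2`, for some `k, l < Δ`. Since `2^a ≤ m`
for `a < Δ`, every `2^a - 2^b` with `b < a` lies strictly between `0` and `m`; so does
`d = |i - j|`, hence `d ≡ ±(2^a - 2^b)` forces `d = 2^a - 2^b` or `m - d = 2^a - 2^b`.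
The unordered pair `{d, m - d}` is `{id(u_i, u_j), m - id(u_i, u_j)}`.
-/

variable {Δ m : ℕ}

def shiftDiffs (Δ m : ℕ) : Set (ZMod m) := {x | ∃ k < Δ, ∃ l < Δ, x = 2 ^ l - 2 ^ k}

lemma neg_mem_shiftDiffs_iff {x : ZMod m} : -x ∈ shiftDiffs Δ m ↔ x ∈ shiftDiffs Δ m := by
  constructor <;> rintro ⟨k, hk, l, hl, h⟩ <;> exact ⟨l, hl, k, hk, by linear_combination -h⟩

lemma knodel_exists_common_neighbor_iff (x y : ZMod m) :
    (∃ w, (knodel Δ m).Adj (Sum.inl x) w ∧ (knodel Δ m).Adj (Sum.inl y) w) ↔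
      x - y ∈ shiftDiffs Δ m := by
  constructor
  · rintro ⟨w | w, hx, hy⟩
    · exact hx.elim
    · obtain ⟨k, hk, rfl⟩ := hx
      obtain ⟨l, hl, h⟩ := hy
      exact ⟨k, hk, l, hl, by linear_combination h⟩
  · rintro ⟨k, hk, l, hl, h⟩
    exact ⟨Sum.inr (x + 2 ^ k - 1), ⟨k, hk, rfl⟩, ⟨l, hl, by linear_combination h⟩⟩

lemma intCast_mem_shiftDiffs_iff (z : ℤ) :
    (z : ZMod m) ∈ shiftDiffs Δ m ↔ (z.natAbs : ZMod m) ∈ shiftDiffs Δ m := by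
  obtain ⟨d, rfl | rfl⟩ := Int.eq_nat_or_neg z
  · simp only [Int.natAbs_natCast, Int.cast_natCast]
  · simp only [Int.natAbs_neg, Int.natAbs_natCast, Int.cast_neg, Int.cast_natCast,
      neg_mem_shiftDiffs_iff]

lemma natCast_eq_two_pow_sub_two_pow_iff {a b d : ℕ} (hba : b ≤ a) (ha : 2 ^ a ≤ m)
    (hd : d < m) : (d : ZMod m) = 2 ^ a - 2 ^ b ↔ d = 2 ^ a - 2 ^ b := by
  have hlt : 2 ^ a - 2 ^ b < m := by
    have := Nat.one_le_two_pow (n := b)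
    omega
  have hcast : ((2 ^ a - 2 ^ b : ℕ) : ZMod m) = 2 ^ a - 2 ^ b := by
    push_cast [Nat.cast_sub (Nat.pow_le_pow_right two_pos hba)]
    rfl
  rw [← hcast, ZMod.natCast_eq_natCast_iff', Nat.mod_eq_of_lt hd, Nat.mod_eq_of_lt hlt]

lemma natCast_mem_shiftDiffs_iff (hm : ∀ a < Δ, 2 ^ a ≤ m) {d : ℕ} (hd0 : 0 < d) (hdm : d < m) :
    (d : ZMod m) ∈ shiftDiffs Δ m ↔ d ∈ Mset Δ ∨ m - d ∈ Mset Δ := by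
  have hneg : ((m - d : ℕ) : ZMod m) = -d := by
    rw [Nat.cast_sub hdm.le, ZMod.natCast_self, zero_sub]
  constructor
  · rintro ⟨k, hk, l, hl, h⟩
    rcases lt_trichotomy k l with hkl | rfl | hlk
    · exact Or.inl ⟨l, k, hkl, hl,
        (natCast_eq_two_pow_sub_two_pow_iff hkl.le (hm l hl) hdm).1 h⟩
    · rw [sub_self, ZMod.natCast_eq_zero_iff] at h
      exact absurd (Nat.eq_zero_of_dvd_of_lt h hdm) hd0.ne'
    · refine Or.inr ⟨k, l, hlk, hk,
        (natCast_eq_two_pow_sub_two_pow_iff hlk.le (hm k hk) (by omega)).1 ?_⟩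
      rw [hneg, h, neg_sub]
  · rintro (⟨a, b, hba, ha, hd⟩ | ⟨a, b, hba, ha, hd⟩)
    · exact ⟨b, hba.trans ha, a, ha,
        (natCast_eq_two_pow_sub_two_pow_iff hba.le (hm a ha) hdm).2 hd⟩
    · refine ⟨a, ha, b, hba.trans ha, ?_⟩
      rw [← neg_sub, ← neg_eq_iff_eq_neg, ← hneg,
        natCast_eq_two_pow_sub_two_pow_iff hba.le (hm a ha) (by omega)]
      exact hd

lemma idDist_mem_or_sub_idDist_mem_iff (S : Set ℕ) {i j : ℕ} (h : ((i : ℤ) - j).natAbs ≤ m) :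
    (idDist m i j ∈ S ∨ m - idDist m i j ∈ S) ↔
      (((i : ℤ) - j).natAbs ∈ S ∨ m - ((i : ℤ) - j).natAbs ∈ S) := by
  unfold idDist
  rcases le_total ((i : ℤ) - j).natAbs (m - ((i : ℤ) - j).natAbs) with hle | hle
  · rw [min_eq_left hle]
  · rw [min_eq_right hle, Nat.sub_sub_self h, or_comm]

lemma two_pow_le_half_of_lt_log {a n : ℕ} (h : a < Nat.log 2 n) : 2 ^ a ≤ n / 2 := by
  have hn : n ≠ 0 := by
    rintro rfl
    simp at h
  rw [Nat.le_div_iff_mul_le two_pos, ← pow_succ]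
  exact Nat.pow_le_of_le_log hn h

theorem knodel_common_neighbor_general (n Δ : ℕ)
    (hΔ : Δ ≤ Nat.log 2 n) (i j : ℕ)
    (hi1 : 1 ≤ i) (hi2 : i ≤ n / 2) (hj1 : 1 ≤ j) (hj2 : j ≤ n / 2) (hij : i ≠ j) :
    (∃ w, (knodel Δ (n / 2)).Adj (Sum.inl (i : ZMod (n / 2))) w ∧
          (knodel Δ (n / 2)).Adj (Sum.inl (j : ZMod (n / 2))) w) ↔
    (idDist (n / 2) i j ∈ Mset Δ ∨ n / 2 - idDist (n / 2) i j ∈ Mset Δ) := by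
  have hpow : ∀ a < Δ, 2 ^ a ≤ n / 2 := fun a ha => two_pow_le_half_of_lt_log (ha.trans_le hΔ)
  have hsub : (i : ZMod (n / 2)) - j = (((i : ℤ) - j : ℤ) : ZMod (n / 2)) := by push_cast; rfl
  rw [knodel_exists_common_neighbor_iff, hsub, intCast_mem_shiftDiffs_iff,
    natCast_mem_shiftDiffs_iff hpow (by omega) (by omega),
    idDist_mem_or_sub_idDist_mem_iff _ (by omega)]

theorem knodel_common_neighbor (n Δ : ℕ) (hn : Even n) (hΔ2 : 2 ≤ Δ)
    (hΔ : Δ ≤ Nat.log 2 n) (i j : ℕ)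
    (hi1 : 1 ≤ i) (hi2 : i ≤ n / 2) (hj1 : 1 ≤ j) (hj2 : j ≤ n / 2) (hij : i ≠ j) :
    (∃ w, (knodel Δ (n / 2)).Adj (Sum.inl (i : ZMod (n / 2))) w ∧
          (knodel Δ (n / 2)).Adj (Sum.inl (j : ZMod (n / 2))) w) ↔
    (idDist (n / 2) i j ∈ Mset Δ ∨ n / 2 - idDist (n / 2) i j ∈ Mset Δ) :=
  knodel_common_neighbor_general n Δ hΔ i j hi1 hi2 hj1 hj2 hij
end

section
/- For every even integer n ≥ 20 with n ≡ 0 (mod 10), the domination number of the 4-regular Knödel graph W_{4,n} equals n/5. -/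
/-!
Each vertex of `W_{4,n}` has degree 4, so it dominates at most 5 of the `n` vertices and
`γ ≥ n/5`. When `5 ∣ n/2`, reduce indices mod 5 and take the `u_i` with `i ≡ 1` together
with the `v_j` with `j ≡ 0`. Because 2 generates `(ZMod 5)ˣ`, the offsets `2^k - 1` for
`k < 4` are `0, 1, 3, 2 (mod 5)`, so every remaining `u_i` has a neighbour `v_j` with
`j ≡ 0`, and every remaining `v_j` has a neighbour `u_i` with `i ≡ 1`. Each residue class
holds `n/10` indices, so this dominating set has `n/5` elements.
-/

theorem AddMonoidHom.ncard_fiber_mul_card {G H : Type*} [AddGroup G] [AddGroup H]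
    (f : G →+ H) (hf : Function.Surjective f) (c : H) :
    {g | f g = c}.ncard * Nat.card H = Nat.card G := by
  obtain ⟨a, rfl⟩ := hf c
  have hfiber : {g | f g = f a} = (a + ·) '' (f.ker : Set G) := by
    rw [Set.image_add_left]
    ext g
    simpa [neg_add_eq_zero] using eq_comm
  rw [hfiber, Set.ncard_image_of_injective _ (add_right_injective a), ← Nat.card_coe_set_eq,
    SetLike.coe_sort_coe, ← AddSubgroup.card_top (G := H), ← f.range_eq_top_of_surjective hf,
    ← AddSubgroup.index_ker, AddSubgroup.card_mul_index]

section Domination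

variable {V : Type*} (G : SimpleGraph V)

theorem dominationNumber_le {D : Set V} (hfin : D.Finite) (hD : IsDominatingSet G D) :
    dominationNumber G ≤ D.ncard :=
  Nat.sInf_le ⟨D, hfin, rfl, hD⟩

theorem IsDominatingSet.card_le_mul_ncard [Fintype V] [DecidableRel G.Adj] {D : Set V}
    (hD : IsDominatingSet G D) {d : ℕ} (hdeg : ∀ v, G.degree v ≤ d) :
    Fintype.card V ≤ (d + 1) * D.ncard := by
  classical
  have hcover : Finset.univ ⊆ D.toFinset.biUnion fun u => insert u (G.neighborFinset u) := by
    intro v _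
    by_cases hv : v ∈ D
    · exact Finset.mem_biUnion.mpr ⟨v, by simpa using hv, Finset.mem_insert_self _ _⟩
    · obtain ⟨u, hu, huv⟩ := hD v hv
      exact Finset.mem_biUnion.mpr ⟨u, by simpa using hu, by simp [huv]⟩
  calc Fintype.card V ≤ _ := Finset.card_le_card hcover
    _ ≤ ∑ u ∈ D.toFinset, (G.degree u + 1) :=
        Finset.card_biUnion_le.trans (Finset.sum_le_sum fun u _ => Finset.card_insert_le _ _)
    _ ≤ ∑ u ∈ D.toFinset, (d + 1) := Finset.sum_le_sum fun u _ => Nat.succ_le_succ (hdeg u)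
    _ = (d + 1) * D.ncard := by
        rw [Finset.sum_const, smul_eq_mul, mul_comm, Set.ncard_eq_toFinset_card']

theorem card_le_mul_dominationNumber [Fintype V] [DecidableRel G.Adj] {d : ℕ}
    (hdeg : ∀ v, G.degree v ≤ d) : Fintype.card V ≤ (d + 1) * dominationNumber G := by
  obtain ⟨D, -, hcard, hD⟩ : dominationNumber G ∈
      {k | ∃ D : Set V, D.Finite ∧ D.ncard = k ∧ IsDominatingSet G D} :=
    Nat.sInf_mem ⟨_, Set.univ, Set.toFinite _, rfl, fun v hv => absurd (Set.mem_univ v) hv⟩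
  exact hcard ▸ hD.card_le_mul_ncard G hdeg

end Domination

theorem knodel_degree_le (Δ m : ℕ) [NeZero m] [DecidableRel (knodel Δ m).Adj]
    (x : ZMod m ⊕ ZMod m) : (knodel Δ m).degree x ≤ Δ := by
  let nbr : ℕ → ZMod m ⊕ ZMod m := fun k =>
    Sum.elim (fun i => Sum.inr (i + 2 ^ k - 1)) (fun j => Sum.inl (j + 1 - 2 ^ k)) x
  have hsub : (knodel Δ m).neighborFinset x ⊆ (Finset.range Δ).image nbr := by
    intro y hy
    rw [SimpleGraph.mem_neighborFinset] at hy
    rcases x with i | j <;> rcases y with i' | j' <;> simp only [knodel] at hy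
    · obtain ⟨k, hk, rfl⟩ := hy
      exact Finset.mem_image.mpr ⟨k, Finset.mem_range.mpr hk, rfl⟩
    · obtain ⟨k, hk, rfl⟩ := hy
      refine Finset.mem_image.mpr ⟨k, Finset.mem_range.mpr hk, ?_⟩
      simp only [nbr, Sum.elim_inr, sub_add_cancel, add_sub_cancel_right]
  calc (knodel Δ m).degree x ≤ ((Finset.range Δ).image nbr).card := Finset.card_le_card hsub
    _ ≤ Δ := Finset.card_image_le.trans (Finset.card_range Δ).le

def residueDominatingSet {R : Type*} [NonAssocRing R] (φ : R →+* ZMod 5) : Set (R ⊕ R) :=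
  Sum.inl '' {i | φ i = 1} ∪ Sum.inr '' {j | φ j = 0}

theorem ncard_residueDominatingSet {R : Type*} [Ring R] [Finite R] (φ : R →+* ZMod 5) :
    (residueDominatingSet φ).ncard * 5 = 2 * Nat.card R := by
  have hfiber (c : ZMod 5) : {i | φ i = c}.ncard * 5 = Nat.card R := by
    simpa using φ.toAddMonoidHom.ncard_fiber_mul_card (ZMod.ringHom_surjective φ) c
  rw [residueDominatingSet, Set.ncard_union_eq Set.disjoint_image_inl_image_inr,
    Set.ncard_image_of_injective _ Sum.inl_injective,
    Set.ncard_image_of_injective _ Sum.inr_injective, add_mul, hfiber, hfiber, two_mul]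

theorem isDominatingSet_residueDominatingSet {Δ m : ℕ} (hΔ : 4 ≤ Δ)
    (φ : ZMod m →+* ZMod 5) :
    IsDominatingSet (knodel Δ m) (residueDominatingSet φ) := by
  have hinr : ∀ a : ZMod 5, a ≠ 1 → ∃ k < 4, a + 2 ^ k - 1 = 0 := by decide
  have hinl : ∀ b : ZMod 5, b ≠ 0 → ∃ k < 4, b + 1 - 2 ^ k = 1 := by decide
  rintro (i | j) hv <;>
    simp only [residueDominatingSet, Set.mem_union, Set.mem_image, Sum.inl.injEq, Sum.inr.injEq,
      reduceCtorEq, and_false, exists_false, or_false, false_or, exists_eq_right] at hv ⊢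
  · obtain ⟨k, hk, hk0⟩ := hinr (φ i) hv
    refine ⟨Sum.inr (i + 2 ^ k - 1), ?_, k, by omega, rfl⟩
    simpa [map_ofNat] using hk0
  · obtain ⟨k, hk, hk1⟩ := hinl (φ j) hv
    refine ⟨Sum.inl (j + 1 - 2 ^ k), ?_, k, by omega, by ring⟩
    simpa [map_ofNat] using hk1

theorem domination_knodel_mod0 (n : ℕ) (h : 20 ≤ n) (hmod : n % 10 = 0) :
    dominationNumber (knodel 4 (n / 2)) = n / 5 := by
  classical
  have : NeZero (n / 2) := ⟨by omega⟩
  let φ := ZMod.castHom (show 5 ∣ n / 2 by omega) (ZMod 5)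
  have hlower := card_le_mul_dominationNumber _ (knodel_degree_le 4 (n / 2))
  have hupper := dominationNumber_le _ (Set.toFinite _)
    (isDominatingSet_residueDominatingSet le_rfl φ)
  have hcard := ncard_residueDominatingSet φ
  simp only [Fintype.card_sum, ZMod.card, Nat.card_zmod] at hlower hcard
  omega
end

section
/- For every even integer n ≥ 22 with n ≡ 2 (mod 10), the domination number of W_{4,n} equals 2⌊n/10⌋ + 2. -/
open Finset Pointwise

section AvoidsDifferences

variable {α : Type*}

def AvoidsDifferences [Add α] (S D : Finset α) : Prop := ∀ s ∈ S, ∀ d ∈ D, s + d ∉ S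

theorem AvoidsDifferences.mono [Add α] {S D D' : Finset α} (h : AvoidsDifferences S D)
    (hD : D' ⊆ D) : AvoidsDifferences S D' :=
  fun s hs d hd => h s hs d (hD hd)

variable [AddCommGroup α] [DecidableEq α] {S A C : Finset α} {x : α}

theorem avoidsDifferences_of_card_add_eq (h : #(S + C) = #S * #C) :
    AvoidsDifferences S ((C - C).erase 0) := by
  intro s hs d hd hsd
  obtain ⟨hd0, c', hc', c, hc, rfl⟩ := (mem_erase.1 hd).imp_right mem_sub.1
  have := card_add_iff.1 h (show (s + (c' - c), c) ∈ (S ×ˢ C : Set _) from ⟨hsd, hc⟩)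
    (show (s, c') ∈ (S ×ˢ C : Set _) from ⟨hs, hc'⟩) (by simp only; abel)
  simp_all

theorem avoidsDifferences_of_card_sub_eq (h : #(S - C) = #S * #C) :
    AvoidsDifferences S ((C - C).erase 0) := by
  rw [sub_eq_add_neg, ← card_neg C] at h
  simpa [neg_sub_neg, sub_eq_add_neg, add_comm] using avoidsDifferences_of_card_add_eq h

theorem mem_sub_iff_exists_sub_mem : x ∈ A - C ↔ ∃ a ∈ A, a - x ∈ C :=
  ⟨fun h => let ⟨a, ha, _, _, h⟩ := mem_sub.1 h; ⟨a, ha, by rwa [← h, sub_sub_cancel]⟩,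
    fun ⟨a, ha, h⟩ => mem_sub.2 ⟨a, ha, _, h, sub_sub_cancel a x⟩⟩

theorem mem_add_iff_exists_sub_mem : x ∈ A + C ↔ ∃ a ∈ A, x - a ∈ C :=
  ⟨fun h => let ⟨a, ha, _, _, h⟩ := mem_add.1 h; ⟨a, ha, by rwa [← h, add_sub_cancel_left]⟩,
    fun ⟨a, ha, h⟩ => mem_add.2 ⟨a, ha, _, h, add_sub_cancel a x⟩⟩

end AvoidsDifferences

theorem Fintype.card_le_card_add_card_of_forall_mem_union {α : Type*} [Fintype α]
    [DecidableEq α] {s t : Finset α} (h : ∀ x, x ∈ s ∪ t) : Fintype.card α ≤ #s + #t :=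
  calc Fintype.card α = #(s ∪ t) := by rw [eq_univ_of_forall h, card_univ]
    _ ≤ #s + #t := card_union_le s t

namespace ZMod

theorem natCast_ne_zero_of_lt {d m : ℕ} (hd : 0 < d) (hdm : d < m) : (d : ZMod m) ≠ 0 := by
  rw [Ne, natCast_eq_zero_iff]
  exact Nat.not_dvd_of_pos_of_lt hd hdm

theorem exists_eq_natCast_five_mul_add {t : ℕ} (x : ZMod (5 * t + 1)) :
    ∃ q r, r < 5 ∧ 5 * q + r ≤ 5 * t ∧ x = ((5 * q + r : ℕ) : ZMod (5 * t + 1)) :=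
  ⟨x.val / 5, x.val % 5, Nat.mod_lt _ (by norm_num),
    by have := x.val_lt; omega, by rw [Nat.div_add_mod, natCast_zmod_val]⟩

variable {m : ℕ} {S : Finset (ZMod m)}

theorem card_add_range_five (hm : 4 < m) (hS : AvoidsDifferences S {1, 2, 3, 4}) :
    #(S + (range 5).image Nat.cast) = 5 * #S := by
  have hinj : Set.InjOn (Nat.cast : ℕ → ZMod m) (range 5) :=
    (CharP.natCast_injOn_Iio (ZMod m) m).mono fun a ha =>
      Set.mem_Iio.2 ((mem_range.1 ha).trans_le (by omega))
  have hshift : ∀ s ∈ S, ∀ s' ∈ S, ∀ a b : ℕ, a ≤ b → b < 5 → s + a = s' + b → a = b := by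
    intro s hs s' hs' a b hab hb hsum
    obtain ⟨d, rfl⟩ := Nat.exists_eq_add_of_le hab
    have hs'd : s' + d = s := by push_cast at hsum; linear_combination hsum.symm
    obtain rfl | hd := Nat.eq_zero_or_pos d
    · rfl
    refine absurd (hs'd ▸ hs) (hS s' hs' d ?_)
    have : d < 5 := by omega
    interval_cases d <;> simp
  rw [card_add_iff.2, card_image_of_injOn hinj, card_range, mul_comm]
  rintro ⟨s, x⟩ ⟨hs, hx⟩ ⟨s', y⟩ ⟨hs', hy⟩ (hsum : s + x = s' + y)
  obtain ⟨a, ha, rfl⟩ := mem_image.1 hx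
  obtain ⟨b, hb, rfl⟩ := mem_image.1 hy
  rw [mem_range] at ha hb
  obtain rfl : a = b := (le_total a b).elim (hshift s hs s' hs' a b · hb hsum)
    fun hba => (hshift s' hs' s hs b a hba ha hsum.symm).symm
  simp_all

theorem five_mul_card_add_one_ne (hm : 4 < m) (hS : AvoidsDifferences S {1, 2, 3, 4, 6}) :
    5 * #S + 1 ≠ m := by
  intro hcard
  have : NeZero m := ⟨by omega⟩
  set G := S + (range 5).image (Nat.cast : ℕ → ZMod m)
  have hG : #G = 5 * #S := card_add_range_five hm (hS.mono (by simp [insert_subset_iff]))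
  obtain ⟨z, hz⟩ : ∃ z, Gᶜ = {z} := card_eq_one.1 (by rw [card_compl, ZMod.card]; omega)
  have mem_G : ∀ x, x ∈ G ↔ x ≠ z := fun x => by rw [Ne, ← mem_singleton, ← hz, mem_compl, not_not]
  have block_mem : ∀ s ∈ S, ∀ a < 5, s + (a : ℕ) ∈ G :=
    fun s hs a ha => add_mem_add hs (mem_image_of_mem _ (mem_range.2 ha))
  have hz1 : z - 1 ≠ z ∧ z + 1 ≠ z := by
    simpa [sub_eq_self, add_eq_left] using natCast_ne_zero_of_lt one_pos (by omega : 1 < m)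
  have hz5 : z - 5 ∈ S := by
    obtain ⟨s, hs, _, hx, hsx⟩ := mem_add.1 ((mem_G (z - 1)).2 hz1.1)
    obtain ⟨a, ha, rfl⟩ := mem_image.1 hx
    rw [mem_range] at ha
    obtain ha4 | rfl : a < 4 ∨ a = 4 := by omega
    · refine absurd (block_mem s hs (a + 1) (by omega)) ((mem_G _).not_left.2 ?_)
      push_cast
      linear_combination hsx
    · convert hs using 1
      push_cast at hsx
      linear_combination -hsx
  obtain ⟨s, hs, _, hx, hsx⟩ := mem_add.1 ((mem_G (z + 1)).2 hz1.2)
  obtain ⟨b, hb, rfl⟩ := mem_image.1 hx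
  have forbidden : ∀ d ∈ ({1, 2, 3, 4, 6} : Finset (ZMod m)), z - 5 + d ≠ s :=
    fun d hd hds => hS _ hz5 d hd (hds ▸ hs)
  rw [mem_range] at hb
  interval_cases b
  · exact forbidden 6 (by simp) (by linear_combination -hsx)
  · exact (mem_G s).1 (by simpa using block_mem s hs 0 (by norm_num)) (by linear_combination hsx)
  · exact forbidden 4 (by simp) (by linear_combination -hsx)
  · exact forbidden 3 (by simp) (by linear_combination -hsx)
  · exact forbidden 2 (by simp) (by linear_combination -hsx)

end ZMod

def knodelOffsets (Δ m : ℕ) : Finset (ZMod m) := (range Δ).image fun k => 2 ^ k - 1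

theorem knodelOffsets_four (m : ℕ) : knodelOffsets 4 m = {0, 1, 3, 7} := by
  rw [knodelOffsets, show range 4 = {0, 1, 2, 3} from rfl]
  norm_num

section knodel

variable {Δ m : ℕ} {i i' j j' : ZMod m}

theorem knodel_adj_inl_inr_iff :
    (knodel Δ m).Adj (.inl i) (.inr j) ↔ j - i ∈ knodelOffsets Δ m := by
  simp [knodel, knodelOffsets, eq_comm, sub_eq_iff_eq_add', add_sub_assoc]

theorem knodel_adj_inr_inl_iff :
    (knodel Δ m).Adj (.inr j) (.inl i) ↔ j - i ∈ knodelOffsets Δ m :=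
  (knodel Δ m).adj_comm _ _ |>.trans knodel_adj_inl_inr_iff

theorem not_knodel_adj_inl_inl : ¬(knodel Δ m).Adj (.inl i) (.inl i') := id

theorem not_knodel_adj_inr_inr : ¬(knodel Δ m).Adj (.inr j) (.inr j') := id

theorem isDominatingSet_knodel_disjSum_iff (A B : Finset (ZMod m)) :
    IsDominatingSet (knodel Δ m) ↑(A.disjSum B) ↔
      (∀ i, i ∈ A ∪ (B - knodelOffsets Δ m)) ∧ ∀ j, j ∈ B ∪ (A + knodelOffsets Δ m) := by
  simp only [IsDominatingSet, Sum.forall, Sum.exists, mem_coe, inl_mem_disjSum, inr_mem_disjSum,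
    knodel_adj_inl_inr_iff, knodel_adj_inr_inl_iff, not_knodel_adj_inl_inl,
    not_knodel_adj_inr_inr, and_false, exists_false, not_false_eq_true, forall_const, imp_false,
    not_not, mem_union, mem_sub_iff_exists_sub_mem, mem_add_iff_exists_sub_mem,
    or_iff_not_imp_left]

end knodel

theorem subset_erase_zero_sub_knodelOffsets_four {m : ℕ} (hm : 6 < m) :
    ({1, 2, 3, 4, 6} : Finset (ZMod m)) ⊆ (knodelOffsets 4 m - knodelOffsets 4 m).erase 0 := by
  rw [knodelOffsets_four]
  set O : Finset (ZMod m) := {0, 1, 3, 7}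
  have mem : ∀ c ∈ O, ∀ c' ∈ O, ∀ d : ℕ, 0 < d → d ≤ 6 → c - c' = d →
      (d : ZMod m) ∈ (O - O).erase 0 :=
    fun c hc c' hc' d hd hd6 h =>
      mem_erase.2 ⟨ZMod.natCast_ne_zero_of_lt hd (by omega), h ▸ sub_mem_sub hc hc'⟩
  simp only [insert_subset_iff, singleton_subset_iff]
  refine ⟨?_, ?_, ?_, ?_, ?_⟩
  · exact_mod_cast mem 1 (by simp [O]) 0 (by simp [O]) 1 one_pos (by norm_num) (by norm_num)
  · exact_mod_cast mem 3 (by simp [O]) 1 (by simp [O]) 2 two_pos (by norm_num) (by norm_num)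
  · exact_mod_cast mem 3 (by simp [O]) 0 (by simp [O]) 3 three_pos (by norm_num) (by norm_num)
  · exact_mod_cast mem 7 (by simp [O]) 3 (by simp [O]) 4 four_pos (by norm_num) (by norm_num)
  · exact_mod_cast mem 7 (by simp [O]) 1 (by simp [O]) 6 (by norm_num) (by norm_num) (by norm_num)

theorem two_mul_add_two_le_card_add_card {t : ℕ} (ht : 2 ≤ t) {A B : Finset (ZMod (5 * t + 1))}
    (hU : ∀ i, i ∈ A ∪ (B - knodelOffsets 4 _)) (hV : ∀ j, j ∈ B ∪ (A + knodelOffsets 4 _)) :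
    2 * t + 2 ≤ #A + #B := by
  set C := knodelOffsets 4 (5 * t + 1) with hC_def
  have hC : #C ≤ 4 := by rw [hC_def, knodelOffsets_four]; exact card_le_four
  have hU' := Fintype.card_le_card_add_card_of_forall_mem_union hU
  have hV' := Fintype.card_le_card_add_card_of_forall_mem_union hV
  rw [ZMod.card] at hU' hV'
  have hBC : #(B - C) ≤ #B * #C := card_sub_le
  have hAC : #(A + C) ≤ #A * #C := card_add_le
  have hB4 : #B * #C ≤ 4 * #B := by rw [mul_comm]; exact Nat.mul_le_mul_right _ hC
  have hA4 : #A * #C ≤ 4 * #A := by rw [mul_comm]; exact Nat.mul_le_mul_right _ hC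
  have hgaps := subset_erase_zero_sub_knodelOffsets_four (m := 5 * t + 1) (by omega)
  by_contra! hlt
  obtain ⟨hB, hcard⟩ | ⟨hA, hcard⟩ :
      #B = t ∧ #(B - C) = #B * #C ∨ #A = t ∧ #(A + C) = #A * #C := by omega
  · exact ZMod.five_mul_card_add_one_ne (by omega)
      ((avoidsDifferences_of_card_sub_eq hcard).mono hgaps) (by omega)
  · exact ZMod.five_mul_card_add_one_ne (by omega)
      ((avoidsDifferences_of_card_add_eq hcard).mono hgaps) (by omega)

def knodelDominatorsLeft (t : ℕ) : Finset (ZMod (5 * t + 1)) :=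
  (range (t + 1)).image fun q => ((5 * q : ℕ) : ZMod (5 * t + 1))

def knodelDominatorsRight (t : ℕ) : Finset (ZMod (5 * t + 1)) :=
  insert ((5 * (t - 1) + 2 : ℕ) : ZMod (5 * t + 1))
    ((range t).image fun q => ((5 * q + 4 : ℕ) : ZMod (5 * t + 1)))

section knodelDominators

variable {t : ℕ}

theorem natCast_mem_knodelDominatorsLeft (q : ℕ) (hq : q ≤ t) :
    ((5 * q : ℕ) : ZMod (5 * t + 1)) ∈ knodelDominatorsLeft t :=
  mem_image_of_mem _ (mem_range.2 (by omega))

theorem natCast_mem_knodelDominatorsRight (q : ℕ) (hq : q < t) :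
    ((5 * q + 4 : ℕ) : ZMod (5 * t + 1)) ∈ knodelDominatorsRight t :=
  mem_insert_of_mem (mem_image_of_mem _ (mem_range.2 hq))

theorem card_knodelDominatorsLeft : #(knodelDominatorsLeft t) = t + 1 := by
  rw [knodelDominatorsLeft, card_image_of_injOn, card_range]
  intro a ha b hb hab
  rw [coe_range, Set.mem_Iio] at ha hb
  have := CharP.natCast_injOn_Iio (ZMod (5 * t + 1)) (5 * t + 1)
    (Set.mem_Iio.2 (by omega)) (Set.mem_Iio.2 (by omega)) hab
  omega

theorem card_knodelDominatorsRight : #(knodelDominatorsRight t) = t + 1 := by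
  have hinj := CharP.natCast_injOn_Iio (ZMod (5 * t + 1)) (5 * t + 1)
  rw [knodelDominatorsRight, card_insert_of_notMem, card_image_of_injOn, card_range]
  · intro a ha b hb hab
    rw [coe_range, Set.mem_Iio] at ha hb
    have := hinj (Set.mem_Iio.2 (by omega)) (Set.mem_Iio.2 (by omega)) hab
    omega
  · simp only [mem_image, mem_range, not_exists, not_and]
    intro q hq h
    have := hinj (Set.mem_Iio.2 (by omega)) (Set.mem_Iio.2 (by omega)) h
    omega

theorem mem_knodelDominatorsLeft_union (i : ZMod (5 * t + 1)) :
    i ∈ knodelDominatorsLeft t ∪ (knodelDominatorsRight t - knodelOffsets 4 _) := by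
  rw [knodelOffsets_four, mem_union, mem_sub]
  obtain ⟨q, r, hr, hqr, rfl⟩ := ZMod.exists_eq_natCast_five_mul_add i
  interval_cases r
  · exact .inl (natCast_mem_knodelDominatorsLeft q (by omega))
  · exact .inr ⟨_, natCast_mem_knodelDominatorsRight q (by omega), 3, by simp,
      by push_cast; ring⟩
  · obtain hq | rfl : q + 1 < t ∨ q = t - 1 := by omega
    · exact .inr ⟨_, natCast_mem_knodelDominatorsRight (q + 1) hq, 7, by simp,
        by push_cast; ring⟩
    · exact .inr ⟨_, mem_insert_self _ _, 0, by simp, sub_zero _⟩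
  · exact .inr ⟨_, natCast_mem_knodelDominatorsRight q (by omega), 1, by simp,
      by push_cast; ring⟩
  · exact .inr ⟨_, natCast_mem_knodelDominatorsRight q (by omega), 0, by simp, sub_zero _⟩

theorem mem_knodelDominatorsRight_union (j : ZMod (5 * t + 1)) :
    j ∈ knodelDominatorsRight t ∪ (knodelDominatorsLeft t + knodelOffsets 4 _) := by
  rw [knodelOffsets_four, mem_union, mem_add]
  obtain ⟨q, r, hr, hqr, rfl⟩ := ZMod.exists_eq_natCast_five_mul_add j
  interval_cases r
  · exact .inr ⟨_, natCast_mem_knodelDominatorsLeft q (by omega), 0, by simp,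
      by push_cast; ring⟩
  · exact .inr ⟨_, natCast_mem_knodelDominatorsLeft q (by omega), 1, by simp,
      by push_cast; ring⟩
  · obtain rfl | ⟨q, rfl⟩ : q = 0 ∨ ∃ q', q = q' + 1 := by cases q <;> simp
    · have h0 : ((5 * t + 1 : ℕ) : ZMod (5 * t + 1)) = 0 := ZMod.natCast_self _
      exact .inr ⟨_, natCast_mem_knodelDominatorsLeft t le_rfl, 3, by simp,
        by push_cast at h0 ⊢; linear_combination h0⟩
    · exact .inr ⟨_, natCast_mem_knodelDominatorsLeft q (by omega), 7, by simp,
        by push_cast; ring⟩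
  · exact .inr ⟨_, natCast_mem_knodelDominatorsLeft q (by omega), 3, by simp,
      by push_cast; ring⟩
  · exact .inl (natCast_mem_knodelDominatorsRight q (by omega))

end knodelDominators

theorem dominationNumber_eq_of_isLeast {V : Type*} {G : SimpleGraph V} {k : ℕ}
    (h : IsLeast {k | ∃ D : Finset V, #D = k ∧ IsDominatingSet G ↑D} k) :
    dominationNumber G = k := by
  rw [dominationNumber, ← h.csInf_eq]
  congr 1
  ext k
  constructor
  · rintro ⟨D, hD, rfl, hdom⟩
    exact ⟨hD.toFinset, (Set.ncard_eq_toFinset_card D hD).symm, by rwa [hD.coe_toFinset]⟩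
  · rintro ⟨D, rfl, hdom⟩
    exact ⟨D, D.finite_toSet, Set.ncard_coe_finset D, hdom⟩

theorem domination_knodel_mod2 (n : ℕ) (h : 22 ≤ n) (hmod : n % 10 = 2) :
    dominationNumber (knodel 4 (n / 2)) = 2 * (n / 10) + 2 := by
  have ht : 2 ≤ n / 10 := by omega
  rw [show n / 2 = 5 * (n / 10) + 1 by omega]
  generalize n / 10 = t at ht ⊢
  refine dominationNumber_eq_of_isLeast ⟨⟨_, ?_, (isDominatingSet_knodel_disjSum_iff _ _).2
    ⟨mem_knodelDominatorsLeft_union, mem_knodelDominatorsRight_union⟩⟩, ?_⟩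
  · rw [card_disjSum, card_knodelDominatorsLeft, card_knodelDominatorsRight]
    ring
  · rintro _ ⟨D, rfl, hD⟩
    rw [← D.toLeft_disjSum_toRight, isDominatingSet_knodel_disjSum_iff] at hD
    rw [← card_toLeft_add_card_toRight]
    exact two_mul_add_two_le_card_add_card ht hD.1 hD.2
end

section
/- For every even integer n ≥ 24 with n ≡ 4 (mod 10), the domination number of W_{4,n} equals 2⌊n/10⌋ + 2. -/
/-!
Write `m = n / 2 = 5t + 2` and split a dominating set `D` into its parts `A ⊆ U` and `B ⊆ V`.
A vertex of `V` has at most four neighbours in `U`, so `U ⊆ A ∪ N(B)` gives `m ≤ |A| + 4|B|`, and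
symmetrically `m ≤ 4|A| + |B|`; in integers these force `|A|, |B| ≥ t + 1`. Conversely,
`u_0, u_5, …, u_{5t}` together with `v_4, v_9, …, v_{5t+4} = v_2` dominate: the jumps
`2^k - 1 ∈ {0, 1, 3, 7}` cover every residue modulo `5`.
-/

open Finset Sum
open scoped Pointwise

lemma dominationNumber_eq_of_forall_le {V : Type*} {G : SimpleGraph V} {k : ℕ} (D₀ : Finset V)
    (hD₀ : IsDominatingSet G D₀) (hcard : #D₀ = k)
    (hmin : ∀ D : Finset V, IsDominatingSet G D → k ≤ #D) : dominationNumber G = k := by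
  have hk : k ∈ {k | ∃ D : Set V, D.Finite ∧ D.ncard = k ∧ IsDominatingSet G D} :=
    ⟨D₀, D₀.finite_toSet, by rw [Set.ncard_coe_finset, hcard], hD₀⟩
  refine le_antisymm (Nat.sInf_le hk) (le_csInf ⟨k, hk⟩ ?_)
  rintro _ ⟨D, hfin, rfl, hD⟩
  rw [Set.ncard_eq_toFinset_card D hfin]
  exact hmin hfin.toFinset (by rwa [Set.Finite.coe_toFinset])

namespace knodel

variable {Δ m : ℕ}

def offsets (Δ m : ℕ) : Finset (ZMod m) := (range Δ).image fun k => 2 ^ k - 1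

lemma card_offsets_le : #(offsets Δ m) ≤ Δ :=
  card_image_le.trans (card_range Δ).le

lemma adj_inl_inr_iff {i j : ZMod m} :
    (knodel Δ m).Adj (inl i) (inr j) ↔ j - i ∈ offsets Δ m := by
  simp only [knodel, offsets, mem_image, mem_range, sub_eq_iff_eq_add', add_sub_assoc, eq_comm]

lemma adj_inl_natCast_inr_natCast {i j k : ℕ} (hk : k < Δ) (h : i + 2 ^ k = j + 1) :
    (knodel Δ m).Adj (inl (i : ZMod m)) (inr (j : ZMod m)) :=
  ⟨k, hk, eq_sub_of_add_eq <| by exact_mod_cast congrArg (Nat.cast : ℕ → ZMod m) h.symm⟩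

section LowerBound

variable [NeZero m] {D : Finset (ZMod m ⊕ ZMod m)}

lemma le_card_toRight_add_card_toLeft_mul (hD : IsDominatingSet (knodel Δ m) D) :
    m ≤ #D.toRight + #D.toLeft * Δ := by
  have hcover : (univ : Finset (ZMod m)) ⊆ D.toRight ∪ (D.toLeft + offsets Δ m) := by
    intro j _
    by_cases hj : inr j ∈ D
    · exact mem_union_left _ (mem_toRight.2 hj)
    obtain ⟨i | i, hi, hadj⟩ := hD _ hj
    · exact mem_union_right _
        (mem_add.2 ⟨i, mem_toLeft.2 hi, j - i, adj_inl_inr_iff.1 hadj, add_sub_cancel i j⟩)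
    · exact hadj.elim
  calc m = #(univ : Finset (ZMod m)) := by simp
    _ ≤ #D.toRight + #(D.toLeft + offsets Δ m) := (card_le_card hcover).trans (card_union_le _ _)
    _ ≤ #D.toRight + #D.toLeft * Δ := by
      gcongr
      exact card_add_le.trans (Nat.mul_le_mul_left _ card_offsets_le)

lemma le_card_toLeft_add_card_toRight_mul (hD : IsDominatingSet (knodel Δ m) D) :
    m ≤ #D.toLeft + #D.toRight * Δ := by
  have hcover : (univ : Finset (ZMod m)) ⊆ D.toLeft ∪ (D.toRight - offsets Δ m) := by
    intro i _
    by_cases hi : inl i ∈ D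
    · exact mem_union_left _ (mem_toLeft.2 hi)
    obtain ⟨j | j, hj, hadj⟩ := hD _ hi
    · exact hadj.elim
    · exact mem_union_right _
        (mem_sub.2 ⟨j, mem_toRight.2 hj, j - i, adj_inl_inr_iff.1 hadj.symm,
          sub_sub_cancel j i⟩)
  calc m = #(univ : Finset (ZMod m)) := by simp
    _ ≤ #D.toLeft + #(D.toRight - offsets Δ m) := (card_le_card hcover).trans (card_union_le _ _)
    _ ≤ #D.toLeft + #D.toRight * Δ := by
      gcongr
      exact card_sub_le.trans (Nat.mul_le_mul_left _ card_offsets_le)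

end LowerBound

section FivePeriodic

variable {t : ℕ}

lemma two_mul_add_two_le_card {D : Finset (ZMod (5 * t + 2) ⊕ ZMod (5 * t + 2))}
    (hD : IsDominatingSet (knodel 4 (5 * t + 2)) D) : 2 * t + 2 ≤ #D := by
  have hV := le_card_toRight_add_card_toLeft_mul hD
  have hU := le_card_toLeft_add_card_toRight_mul hD
  rw [← card_toLeft_add_card_toRight]
  omega

def fiveMultiples (t : ℕ) : Finset (ZMod (5 * t + 2)) :=
  (range (t + 1)).image fun i => ((5 * i : ℕ) : ZMod (5 * t + 2))

def dominatingSet (t : ℕ) : Finset (ZMod (5 * t + 2) ⊕ ZMod (5 * t + 2)) :=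
  (fiveMultiples t).disjSum ((fiveMultiples t).map (addRightEmbedding 4))

lemma card_fiveMultiples : #(fiveMultiples t) = t + 1 := by
  rw [fiveMultiples, card_image_of_injOn, card_range]
  intro i hi j hj hij
  simp only [coe_range, Set.mem_Iio] at hi hj
  rw [ZMod.natCast_eq_natCast_iff', Nat.mod_eq_of_lt (by omega), Nat.mod_eq_of_lt (by omega)] at hij
  omega

lemma card_dominatingSet : #(dominatingSet t) = 2 * t + 2 := by
  rw [dominatingSet, card_disjSum, card_map, card_fiveMultiples]
  ring

lemma inl_mem_dominatingSet {i : ℕ} (hi : i ≤ t) :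
    inl ((5 * i : ℕ) : ZMod (5 * t + 2)) ∈ dominatingSet t := by
  rw [dominatingSet, inl_mem_disjSum, fiveMultiples, mem_image]
  exact ⟨i, mem_range.2 (by omega), rfl⟩

lemma inr_mem_dominatingSet {i : ℕ} (hi : i ≤ t) :
    inr ((5 * i + 4 : ℕ) : ZMod (5 * t + 2)) ∈ dominatingSet t := by
  rw [dominatingSet, inr_mem_disjSum, mem_map]
  exact ⟨_, mem_image.2 ⟨i, mem_range.2 (by omega), rfl⟩, by simp⟩

lemma inr_two_mem_dominatingSet : inr ((2 : ℕ) : ZMod (5 * t + 2)) ∈ dominatingSet t := by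
  have h : ((2 : ℕ) : ZMod (5 * t + 2)) = ((5 * t + 4 : ℕ) : ZMod (5 * t + 2)) := by
    rw [ZMod.natCast_eq_natCast_iff', show 5 * t + 4 = 2 + (5 * t + 2) by ring, Nat.add_mod_right]
  rw [h]
  exact inr_mem_dominatingSet le_rfl

lemma index_cases_inl {n : ℕ} (hn : n < 5 * t + 2) :
    (∃ i ≤ t, n = 5 * i) ∨ ∃ i ≤ t, ∃ k < 4, n + 2 ^ k = (5 * i + 4) + 1 := by
  obtain ⟨q, r, hr, rfl⟩ : ∃ q r, r < 5 ∧ n = 5 * q + r :=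
    ⟨n / 5, n % 5, by omega, by omega⟩
  interval_cases r
  · exact .inl ⟨q, by omega, rfl⟩
  · exact .inr ⟨q, by omega, 2, by norm_num, by omega⟩
  · exact .inr ⟨q + 1, by omega, 3, by norm_num, by omega⟩
  · exact .inr ⟨q, by omega, 1, by norm_num, by omega⟩
  · exact .inr ⟨q, by omega, 0, by norm_num, by omega⟩

lemma index_cases_inr {n : ℕ} (hn : n < 5 * t + 2) :
    n = 2 ∨ (∃ i ≤ t, n = 5 * i + 4) ∨ ∃ i ≤ t, ∃ k < 4, 5 * i + 2 ^ k = n + 1 := by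
  obtain ⟨q, r, hr, rfl⟩ : ∃ q r, r < 5 ∧ n = 5 * q + r :=
    ⟨n / 5, n % 5, by omega, by omega⟩
  interval_cases r
  · exact .inr (.inr ⟨q, by omega, 0, by norm_num, by omega⟩)
  · exact .inr (.inr ⟨q, by omega, 1, by norm_num, by omega⟩)
  · rcases q with _ | q
    · exact .inl rfl
    · exact .inr (.inr ⟨q, by omega, 3, by norm_num, by omega⟩)
  · exact .inr (.inr ⟨q, by omega, 2, by norm_num, by omega⟩)
  · exact .inr (.inl ⟨q, by omega, rfl⟩)

lemma isDominatingSet_dominatingSet :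
    IsDominatingSet (knodel 4 (5 * t + 2)) (dominatingSet t : Set _) := by
  rintro (x | x) hx <;>
    obtain ⟨n, hn, rfl⟩ : ∃ n < 5 * t + 2, (n : ZMod (5 * t + 2)) = x :=
      ⟨x.val, x.val_lt, x.natCast_zmod_val⟩
  · rcases index_cases_inl hn with ⟨i, hi, rfl⟩ | ⟨i, hi, k, hk, hadj⟩
    · exact absurd (inl_mem_dominatingSet hi) hx
    · exact ⟨_, inr_mem_dominatingSet hi, (adj_inl_natCast_inr_natCast hk hadj).symm⟩
  · rcases index_cases_inr hn with rfl | ⟨i, hi, rfl⟩ | ⟨i, hi, k, hk, hadj⟩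
    · exact absurd inr_two_mem_dominatingSet hx
    · exact absurd (inr_mem_dominatingSet hi) hx
    · exact ⟨_, inl_mem_dominatingSet hi, adj_inl_natCast_inr_natCast hk hadj⟩

end FivePeriodic

end knodel

open knodel in
theorem domination_knodel_mod4_general (n : ℕ) (hmod : n % 10 = 4) :
    dominationNumber (knodel 4 (n / 2)) = 2 * (n / 10) + 2 := by
  obtain ⟨t, rfl⟩ : ∃ t, n = 10 * t + 4 := ⟨n / 10, by omega⟩
  rw [show (10 * t + 4) / 2 = 5 * t + 2 by omega, show (10 * t + 4) / 10 = t by omega]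
  exact dominationNumber_eq_of_forall_le (dominatingSet t) isDominatingSet_dominatingSet
    card_dominatingSet fun _ => two_mul_add_two_le_card

theorem domination_knodel_mod4 (n : ℕ) (h : 24 ≤ n) (hmod : n % 10 = 4) :
    dominationNumber (knodel 4 (n / 2)) = 2 * (n / 10) + 2 :=
  domination_knodel_mod4_general n hmod
end

section
/- The domination number of the Knödel graph W_{4,26} is 7. -/
/-! The upper bound is the explicit dominating set `{u₀, u₁, u₂, u₃, v₇, v₁₁, v₁₂}`. Counting does
not give the lower bound (six closed neighbourhoods of size 5 could cover 26 vertices), so it is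
established by an exhaustive search: any dominating set meets the closed neighbourhood of the
first undominated vertex, so branching over those five vertices and recursing six levels deep
explores every candidate 6-set up to order. The dominated vertices are kept as a bitmask, which
the kernel evaluates with fast natural-number arithmetic. -/

instance (Δ m : ℕ) : DecidableRel (knodel Δ m).Adj
  | Sum.inl i, Sum.inr j => inferInstanceAs (Decidable (∃ k, k < Δ ∧ j = i + 2 ^ k - 1))
  | Sum.inr j, Sum.inl i => inferInstanceAs (Decidable (∃ k, k < Δ ∧ j = i + 2 ^ k - 1))
  | Sum.inl _, Sum.inl _ => isFalse id
  | Sum.inr _, Sum.inr _ => isFalse id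

section Domination

variable {V : Type*} (G : SimpleGraph V)

theorem isDominatingSet_iff (D : Set V) :
    IsDominatingSet G D ↔ ∀ v, ∃ u ∈ D, u = v ∨ G.Adj u v := by
  refine ⟨fun hD v => ?_, fun hD v hv => ?_⟩
  · by_cases hv : v ∈ D
    · exact ⟨v, hv, Or.inl rfl⟩
    · obtain ⟨u, hu, huv⟩ := hD v hv
      exact ⟨u, hu, Or.inr huv⟩
  · obtain ⟨u, hu, rfl | huv⟩ := hD v
    · exact absurd hu hv
    · exact ⟨u, hu, huv⟩

theorem dominationNumber_eq_card {D : Finset V} (hD : IsDominatingSet G D)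
    (hmin : ∀ D' : Finset V, IsDominatingSet G D' → D.card ≤ D'.card) :
    dominationNumber G = D.card := by
  refine le_antisymm (Nat.sInf_le ⟨D, D.finite_toSet, Set.ncard_coe_finset D, hD⟩) ?_
  refine le_csInf ⟨_, D, D.finite_toSet, rfl, hD⟩ ?_
  rintro _ ⟨D', hfin, rfl, hD'⟩
  rw [← hfin.coe_toFinset] at hD'
  rw [Set.ncard_eq_toFinset_card D' hfin]
  exact hmin _ hD'

end Domination

theorem Nat.eq_two_pow_sub_one_of_testBit {m n : ℕ} (hm : m < 2 ^ n)
    (h : ∀ i < n, m.testBit i = true) : m = 2 ^ n - 1 := by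
  refine Nat.eq_of_testBit_eq fun i => ?_
  rw [Nat.testBit_two_pow_sub_one]
  by_cases hi : i < n
  · simp [h i hi, hi]
  · simp only [hi, decide_false]
    exact Nat.testBit_lt_two_pow (hm.trans_le (Nat.pow_le_pow_right two_pos (not_lt.1 hi)))

section Search

variable {V : Type*} {n : ℕ} (G : SimpleGraph V) [DecidableRel G.Adj] (e : V ≃ Fin n)

def closedNbhdMask (u : V) : ℕ :=
  Nat.ofBits fun j => decide (e u = j ∨ G.Adj u (e.symm j))

/-- Whether at most `k` further vertices can dominate all vertices whose bit in `m` is clear. -/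
def dominationSearch : ℕ → ℕ → Bool
  | 0, m => m == 2 ^ n - 1
  | k + 1, m => match (List.finRange n).find? (fun i : Fin n => !m.testBit i) with
    | none => true
    | some w => (List.finRange n).any fun j =>
        (closedNbhdMask G e (e.symm w)).testBit j &&
          dominationSearch k (m ||| closedNbhdMask G e (e.symm j))

theorem closedNbhdMask_lt (u : V) : closedNbhdMask G e u < 2 ^ n :=
  Nat.ofBits_lt_two_pow _

theorem testBit_closedNbhdMask (u v : V) :
    (closedNbhdMask G e u).testBit (e v) = true ↔ u = v ∨ G.Adj u v := by
  simp [closedNbhdMask]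

theorem dominationSearch_eq_true {k m : ℕ} (hm : m < 2 ^ n) (D : Finset V) (hD : D.card ≤ k)
    (hcov : ∀ v, m.testBit (e v) = true ∨ ∃ u ∈ D, u = v ∨ G.Adj u v) :
    dominationSearch G e k m = true := by
  classical
  induction k generalizing m D with
  | zero =>
    have hmax : ∀ i < n, m.testBit i = true := fun i hi => by
      simpa [Finset.card_eq_zero.1 (Nat.le_zero.1 hD)] using hcov (e.symm ⟨i, hi⟩)
    simp [dominationSearch, Nat.eq_two_pow_sub_one_of_testBit hm hmax]
  | succ k ih =>
    rw [dominationSearch]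
    split
    next => rfl
    next w hfind =>
      have hw : m.testBit w = false := by simpa using List.find?_some hfind
      obtain ⟨u, huD, hwu⟩ := (hcov (e.symm w)).resolve_left (by simpa using hw)
      refine List.any_eq_true.2 ⟨e u, List.mem_finRange _, Bool.and_eq_true _ _ ▸ ⟨?_, ?_⟩⟩
      · rw [testBit_closedNbhdMask]
        exact hwu.imp Eq.symm SimpleGraph.Adj.symm
      · rw [e.symm_apply_apply]
        refine ih (Nat.or_lt_two_pow hm (closedNbhdMask_lt G e u)) (D.erase u)
          (by grind [Finset.card_erase_of_mem]) fun v => ?_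
        rw [Nat.testBit_or, Bool.or_eq_true, testBit_closedNbhdMask]
        rcases hcov v with hv | ⟨u', hu'D, hu'v⟩
        · exact Or.inl (Or.inl hv)
        · by_cases hu' : u' = u
          · exact Or.inl (Or.inr (hu' ▸ hu'v))
          · exact Or.inr ⟨u', Finset.mem_erase.2 ⟨hu', hu'D⟩, hu'v⟩

theorem lt_card_of_dominationSearch_eq_false {k : ℕ} (h : dominationSearch G e k 0 = false)
    {D : Finset V} (hD : IsDominatingSet G D) : k < D.card := by
  by_contra! hk
  refine Bool.false_ne_true (h ▸ dominationSearch_eq_true G e (Nat.two_pow_pos n) D hk fun v => ?_)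
  simpa using (isDominatingSet_iff G D).1 hD v

end Search

theorem dominationSearch_knodel_four_thirteen :
    dominationSearch (knodel 4 13) (finSumFinEquiv : ZMod 13 ⊕ ZMod 13 ≃ Fin 26) 6 0 = false := by
  decide +kernel

/-- `u₀, u₁, u₂, u₃` dominate `v₀, …, v₁₀`, and `v₇, v₁₁, v₁₂` dominate the remaining `uᵢ`. -/
def knodelDominatingSet : Finset (ZMod 13 ⊕ ZMod 13) :=
  {.inl 0, .inl 1, .inl 2, .inl 3, .inr 7, .inr 11, .inr 12}

theorem domination_knodel_26 : dominationNumber (knodel 4 13) = 7 := by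
  have hD : IsDominatingSet (knodel 4 13) knodelDominatingSet :=
    (isDominatingSet_iff _ _).2 (by decide)
  rw [dominationNumber_eq_card _ hD fun D' hD' =>
    lt_card_of_dominationSearch_eq_false _ _ dominationSearch_knodel_four_thirteen hD']
  rfl
end

section
/- In W_{4,n} with n = 10t (t ≥ 2), the set D = {u_1, u_6, ..., u_{5t-4}} ∪ {v_5, v_{10}, ..., v_{5t}} (indices in arithmetic progression with common difference 5) is a dominating set of size 2t. -/
/-!
Reduce indices modulo 5, which is well defined because `5 ∣ n/2`: the `u`-part of `D` is the
residue class `1` and the `v`-part the class `0`. The offsets `2^k - 1 = 0, 1, 3, 7` are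
`0, 1, 3, 2` modulo 5, so every `u_i` with `i ≢ 1` has a neighbour `v_j` with `j ≡ 0`, and every
`v_j` with `j ≢ 0` has a neighbour `u_i` with `i ≡ 1`.
-/

section ResidueClasses

variable {n t : ℕ}

theorem injOn_natCast_mul_add (hn : n ≠ 0) (c : ℕ) :
    Set.InjOn (fun j : ℕ => ((n * j + c : ℕ) : ZMod (n * t))) (Set.Iio t) := by
  intro a ha b hb hab
  rw [ZMod.natCast_eq_natCast_iff] at hab
  exact ((hab.add_right_cancel' c).mul_left_cancel' hn).eq_of_lt_of_lt ha hb

theorem image_natCast_mul_add_Iio [NeZero (n * t)] (c : ℕ) :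
    (fun j : ℕ => ((n * j + c : ℕ) : ZMod (n * t))) '' Set.Iio t =
      {x | ZMod.castHom (dvd_mul_right n t) (ZMod n) x = c} := by
  ext x
  constructor
  · rintro ⟨j, -, rfl⟩
    simp [ZMod.castHom_apply, ZMod.cast_natCast (dvd_mul_right n t)]
  · intro hx
    have hdvd : n ∣ (x - c).val := by
      rw [← ZMod.natCast_eq_zero_iff, ZMod.natCast_val,
        ← ZMod.castHom_apply (h := dvd_mul_right n t), map_sub, hx, map_natCast, sub_self]
    obtain ⟨j, hj⟩ := hdvd
    have hjt : j < t := by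
      have := ZMod.val_lt (x - c : ZMod (n * t))
      rw [hj] at this
      exact Nat.lt_of_mul_lt_mul_left this
    refine ⟨j, hjt, ?_⟩
    dsimp only
    rw [Nat.cast_add, ← hj, ZMod.natCast_zmod_val, sub_add_cancel]

end ResidueClasses

theorem exists_add_two_pow_sub_one_eq_zero :
    ∀ r : ZMod 5, r ≠ 1 → ∃ k < 4, r + 2 ^ k - 1 = 0 := by
  decide

theorem exists_sub_two_pow_sub_one_eq_one :
    ∀ r : ZMod 5, r ≠ 0 → ∃ k < 4, r - (2 ^ k - 1) = 1 := by
  decide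

theorem isDominatingSet_knodel_four {m : ℕ} (h : 5 ∣ m) :
    IsDominatingSet (knodel 4 m)
      (Sum.inl '' {i | ZMod.castHom h (ZMod 5) i = 1} ∪
        Sum.inr '' {j | ZMod.castHom h (ZMod 5) j = 0}) := by
  set res := ZMod.castHom h (ZMod 5)
  rintro (i | j) hv
  · have hi : res i ≠ 1 := fun hi => hv (Or.inl ⟨i, hi, rfl⟩)
    obtain ⟨k, hk, hres⟩ := exists_add_two_pow_sub_one_eq_zero (res i) hi
    refine ⟨Sum.inr (i + 2 ^ k - 1), Or.inr ⟨_, ?_, rfl⟩, k, hk, rfl⟩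
    simpa only [Set.mem_ofPred_eq, map_sub, map_add, map_pow, map_ofNat, map_one] using hres
  · have hj : res j ≠ 0 := fun hj => hv (Or.inr ⟨j, hj, rfl⟩)
    obtain ⟨k, hk, hres⟩ := exists_sub_two_pow_sub_one_eq_one (res j) hj
    refine ⟨Sum.inl (j - (2 ^ k - 1)), Or.inl ⟨_, ?_, rfl⟩, k, hk, by ring⟩
    simpa only [Set.mem_ofPred_eq, map_sub, map_pow, map_ofNat, map_one] using hres

theorem dominating_set_mod0 (t : ℕ) (ht : 2 ≤ t) :
    IsDominatingSet (knodel 4 (5 * t))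
      (((fun j : ℕ => (Sum.inl ((5 * j + 1 : ℕ) : ZMod (5 * t)) :
          ZMod (5 * t) ⊕ ZMod (5 * t))) '' Set.Iio t) ∪
       ((fun j : ℕ => (Sum.inr ((5 * (j + 1) : ℕ) : ZMod (5 * t)) :
          ZMod (5 * t) ⊕ ZMod (5 * t))) '' Set.Iio t)) ∧
    (((fun j : ℕ => (Sum.inl ((5 * j + 1 : ℕ) : ZMod (5 * t)) :
          ZMod (5 * t) ⊕ ZMod (5 * t))) '' Set.Iio t) ∪
       ((fun j : ℕ => (Sum.inr ((5 * (j + 1) : ℕ) : ZMod (5 * t)) :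
          ZMod (5 * t) ⊕ ZMod (5 * t))) '' Set.Iio t)).ncard = 2 * t := by
  have : NeZero (5 * t) := ⟨by omega⟩
  have hU : (fun j : ℕ => (Sum.inl ((5 * j + 1 : ℕ) : ZMod (5 * t)) :
      ZMod (5 * t) ⊕ ZMod (5 * t))) '' Set.Iio t =
      Sum.inl '' ((fun j : ℕ => ((5 * j + 1 : ℕ) : ZMod (5 * t))) '' Set.Iio t) :=
    (Set.image_image _ _ _).symm
  have hV : (fun j : ℕ => (Sum.inr ((5 * (j + 1) : ℕ) : ZMod (5 * t)) :
      ZMod (5 * t) ⊕ ZMod (5 * t))) '' Set.Iio t =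
      Sum.inr '' ((fun j : ℕ => ((5 * j + 5 : ℕ) : ZMod (5 * t))) '' Set.Iio t) :=
    -- `5 * (j + 1)` unfolds definitionally to `5 * j + 5`
    (Set.image_image _ _ _).symm
  have hIio : (Set.Iio t).ncard = t := by
    rw [← Finset.coe_Iio, Set.ncard_coe_finset, Nat.card_Iio]
  rw [hU, hV]
  refine ⟨?_, ?_⟩
  · rw [image_natCast_mul_add_Iio, image_natCast_mul_add_Iio, Nat.cast_one, ZMod.natCast_self]
    exact isDominatingSet_knodel_four (dvd_mul_right 5 t)
  · rw [Set.ncard_union_eq Set.disjoint_image_inl_image_inr (Set.toFinite _) (Set.toFinite _),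
      Set.ncard_image_of_injective _ Sum.inl_injective,
      Set.ncard_image_of_injective _ Sum.inr_injective,
      (injOn_natCast_mul_add (by norm_num) _).ncard_image,
      (injOn_natCast_mul_add (by norm_num) _).ncard_image, hIio]
    ring
end

section
/- In W_{4,n} with n = 10t + 2 (t ≥ 2), the set D = {u_1, u_6, ..., u_{5t+1}} ∪ {v_5, v_{10}, ..., v_{5t}} ∪ {v_{5t+1}} is a dominating set of size 2t + 2. -/
/-!
Work in `ZMod (5t+1)` and let `P = {0, 5, …, 5t}`; since `5t + 1 = 0`, the set `D` is
`{u_x : x ∈ P + 1} ∪ {v_x : x ∈ P}`. A vertex `u_x` sees `v_{x+c}` for `c ∈ {0, 1, 3, 7}`, and a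
vertex `v_y` sees `u_{y-c}`. Reducing mod 5, the offsets `{-1, 0, 1, 3, 7}` resp. `{0, 1, 2, 4, 8}`
hit every residue class, so every `u_x` resp. `v_y` is in `D` or has a neighbour in `D`; the only
cases where the neighbour leaves `{0, …, 5t}` are `u_{5t-2}` and `v_3`, both dominated by `v_0`
resp. `u_0` through the wrap-around `5t + 1 = 0`.
-/

theorem isDominatingSet_knodel_of_cover {Δ m : ℕ} {SU SV : Set (ZMod m)}
    (hU : ∀ x, x ∈ SU ∨ ∃ s ∈ SV, ∃ k < Δ, s = x + 2 ^ k - 1)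
    (hV : ∀ y, y ∈ SV ∨ ∃ s ∈ SU, ∃ k < Δ, y = s + 2 ^ k - 1) :
    IsDominatingSet (knodel Δ m) (Sum.inl '' SU ∪ Sum.inr '' SV) := by
  rintro (x | y) hxy
  · obtain ⟨s, hs, k, hk, rfl⟩ := (hU x).resolve_left fun hx => hxy (.inl ⟨x, hx, rfl⟩)
    exact ⟨Sum.inr _, .inr ⟨_, hs, rfl⟩, k, hk, rfl⟩
  · obtain ⟨s, hs, k, hk, rfl⟩ := (hV y).resolve_left fun hy => hxy (.inr ⟨y, hy, rfl⟩)
    exact ⟨Sum.inl s, .inl ⟨s, hs, rfl⟩, k, hk, rfl⟩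

theorem Set.ncard_image_inl_union_image_inr {α β : Type*} [Finite α] [Finite β]
    (s : Set α) (t : Set β) :
    (Sum.inl '' s ∪ Sum.inr '' t : Set (α ⊕ β)).ncard = s.ncard + t.ncard := by
  rw [Set.ncard_union_eq Set.disjoint_image_inl_image_inr,
    Set.ncard_image_of_injective _ Sum.inl_injective,
    Set.ncard_image_of_injective _ Sum.inr_injective]

theorem ZMod.exists_natCast_eq_mul_add {m : ℕ} [NeZero m] {d : ℕ} (hd : 0 < d) (x : ZMod m) :
    ∃ q r, r < d ∧ d * q + r < m ∧ x = ((d * q + r : ℕ) : ZMod m) :=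
  ⟨x.val / d, x.val % d, Nat.mod_lt _ hd, by rw [Nat.div_add_mod]; exact x.val_lt,
    by rw [Nat.div_add_mod, ZMod.natCast_zmod_val]⟩

theorem five_mul_natCast_add_one_eq_zero (t : ℕ) : 5 * (t : ZMod (5 * t + 1)) + 1 = 0 := by
  exact_mod_cast ZMod.natCast_self (5 * t + 1)

def multiplesOfFive (t : ℕ) : Set (ZMod (5 * t + 1)) :=
  (fun j : ℕ => ((5 * j : ℕ) : ZMod (5 * t + 1))) '' Set.Iio (t + 1)

namespace multiplesOfFive

variable {t : ℕ}

theorem ncard_eq : (multiplesOfFive t).ncard = t + 1 := by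
  rw [multiplesOfFive, Set.InjOn.ncard_image, ← Finset.coe_Iio, Set.ncard_coe_finset,
    Nat.card_Iio]
  intro i hi j hj hij
  have hi : 5 * i < 5 * t + 1 := by simp only [Set.mem_Iio] at hi; omega
  have hj : 5 * j < 5 * t + 1 := by simp only [Set.mem_Iio] at hj; omega
  have := congrArg ZMod.val hij
  rw [ZMod.val_cast_of_lt hi, ZMod.val_cast_of_lt hj] at this
  omega

theorem five_mul_mem {j : ℕ} (hj : j ≤ t) : ((5 * j : ℕ) : ZMod (5 * t + 1)) ∈ multiplesOfFive t :=
  ⟨j, Nat.lt_succ_of_le hj, rfl⟩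

theorem covers_inl (x : ZMod (5 * t + 1)) :
    x ∈ (· + 1) '' multiplesOfFive t ∨ ∃ s ∈ multiplesOfFive t, ∃ k < 4, s = x + 2 ^ k - 1 := by
  obtain ⟨q, r, hr, hx, rfl⟩ := ZMod.exists_natCast_eq_mul_add (d := 5) (by norm_num) x
  interval_cases r
  · rcases q with _ | q
    · refine .inl ⟨_, five_mul_mem le_rfl, ?_⟩
      push_cast; linear_combination five_mul_natCast_add_one_eq_zero t
    · exact .inr ⟨_, five_mul_mem (j := q + 1) (by omega), 0, by norm_num, by push_cast; ring⟩
  · exact .inl ⟨_, five_mul_mem (j := q) (by omega), by push_cast; ring⟩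
  · exact .inr ⟨_, five_mul_mem (j := q + 1) (by omega), 2, by norm_num, by push_cast; ring⟩
  · by_cases hq : q + 2 ≤ t
    · exact .inr ⟨_, five_mul_mem hq, 3, by norm_num, by push_cast; ring⟩
    · have ht := congrArg (Nat.cast : ℕ → ZMod (5 * t + 1)) (show t = q + 1 by omega)
      refine .inr ⟨_, five_mul_mem (j := 0) (by omega), 2, by norm_num, ?_⟩
      push_cast at ht ⊢; linear_combination -five_mul_natCast_add_one_eq_zero t + 5 * ht
  · exact .inr ⟨_, five_mul_mem (j := q + 1) (by omega), 1, by norm_num, by push_cast; ring⟩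

theorem covers_inr (y : ZMod (5 * t + 1)) :
    y ∈ multiplesOfFive t ∨ ∃ s ∈ (· + 1) '' multiplesOfFive t, ∃ k < 4, y = s + 2 ^ k - 1 := by
  obtain ⟨q, r, hr, hy, rfl⟩ := ZMod.exists_natCast_eq_mul_add (d := 5) (by norm_num) y
  interval_cases r
  · exact .inl (five_mul_mem (by omega))
  · exact .inr ⟨_, ⟨_, five_mul_mem (j := q) (by omega), rfl⟩, 0, by norm_num, by push_cast; ring⟩
  · exact .inr ⟨_, ⟨_, five_mul_mem (j := q) (by omega), rfl⟩, 1, by norm_num, by push_cast; ring⟩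
  · rcases q with _ | q
    · refine .inr ⟨_, ⟨_, five_mul_mem le_rfl, rfl⟩, 2, by norm_num, ?_⟩
      push_cast; linear_combination -five_mul_natCast_add_one_eq_zero t
    · exact .inr ⟨_, ⟨_, five_mul_mem (j := q) (by omega), rfl⟩, 3, by norm_num, by push_cast; ring⟩
  · exact .inr ⟨_, ⟨_, five_mul_mem (j := q) (by omega), rfl⟩, 2, by norm_num, by push_cast; ring⟩

end multiplesOfFive

theorem image_inl_eq_multiplesOfFive_add_one (t : ℕ) :
    (fun j : ℕ => (Sum.inl ((5 * j + 1 : ℕ) : ZMod (5 * t + 1)) :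
      ZMod (5 * t + 1) ⊕ ZMod (5 * t + 1))) '' Set.Iio (t + 1) =
    Sum.inl '' ((· + 1) '' multiplesOfFive t) := by
  simp only [multiplesOfFive, Set.image_image, Nat.cast_add, Nat.cast_one]

theorem image_inr_union_eq_multiplesOfFive (t : ℕ) :
    (fun j : ℕ => (Sum.inr ((5 * (j + 1) : ℕ) : ZMod (5 * t + 1)) :
      ZMod (5 * t + 1) ⊕ ZMod (5 * t + 1))) '' Set.Iio t ∪
    {Sum.inr ((5 * t + 1 : ℕ) : ZMod (5 * t + 1))} = Sum.inr '' multiplesOfFive t := by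
  ext v
  constructor
  · rintro (⟨j, hj, rfl⟩ | rfl)
    · exact ⟨_, multiplesOfFive.five_mul_mem (j := j + 1) hj, rfl⟩
    · exact ⟨_, multiplesOfFive.five_mul_mem (j := 0) (Nat.zero_le t), by simp⟩
  · rintro ⟨_, ⟨_ | j, hj, rfl⟩, rfl⟩
    · exact .inr (by simp)
    · exact .inl ⟨j, Nat.succ_lt_succ_iff.mp hj, rfl⟩

theorem dominating_set_mod2_general (t : ℕ) :
    IsDominatingSet (knodel 4 (5 * t + 1))
      (((fun j : ℕ => (Sum.inl ((5 * j + 1 : ℕ) : ZMod (5 * t + 1)) :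
          ZMod (5 * t + 1) ⊕ ZMod (5 * t + 1))) '' Set.Iio (t + 1)) ∪
       ((fun j : ℕ => (Sum.inr ((5 * (j + 1) : ℕ) : ZMod (5 * t + 1)) :
          ZMod (5 * t + 1) ⊕ ZMod (5 * t + 1))) '' Set.Iio t) ∪
       {Sum.inr ((5 * t + 1 : ℕ) : ZMod (5 * t + 1))}) ∧
    (((fun j : ℕ => (Sum.inl ((5 * j + 1 : ℕ) : ZMod (5 * t + 1)) :
          ZMod (5 * t + 1) ⊕ ZMod (5 * t + 1))) '' Set.Iio (t + 1)) ∪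
       ((fun j : ℕ => (Sum.inr ((5 * (j + 1) : ℕ) : ZMod (5 * t + 1)) :
          ZMod (5 * t + 1) ⊕ ZMod (5 * t + 1))) '' Set.Iio t) ∪
       {Sum.inr ((5 * t + 1 : ℕ) : ZMod (5 * t + 1))}).ncard = 2 * t + 2 := by
  rw [Set.union_assoc, image_inl_eq_multiplesOfFive_add_one, image_inr_union_eq_multiplesOfFive]
  refine ⟨isDominatingSet_knodel_of_cover multiplesOfFive.covers_inl
    multiplesOfFive.covers_inr, ?_⟩
  rw [Set.ncard_image_inl_union_image_inr, Set.ncard_image_of_injective _ (add_left_injective 1),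
    multiplesOfFive.ncard_eq]
  ring

theorem dominating_set_mod2 (t : ℕ) (ht : 2 ≤ t) :
    IsDominatingSet (knodel 4 (5 * t + 1))
      (((fun j : ℕ => (Sum.inl ((5 * j + 1 : ℕ) : ZMod (5 * t + 1)) :
          ZMod (5 * t + 1) ⊕ ZMod (5 * t + 1))) '' Set.Iio (t + 1)) ∪
       ((fun j : ℕ => (Sum.inr ((5 * (j + 1) : ℕ) : ZMod (5 * t + 1)) :
          ZMod (5 * t + 1) ⊕ ZMod (5 * t + 1))) '' Set.Iio t) ∪
       {Sum.inr ((5 * t + 1 : ℕ) : ZMod (5 * t + 1))}) ∧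
    (((fun j : ℕ => (Sum.inl ((5 * j + 1 : ℕ) : ZMod (5 * t + 1)) :
          ZMod (5 * t + 1) ⊕ ZMod (5 * t + 1))) '' Set.Iio (t + 1)) ∪
       ((fun j : ℕ => (Sum.inr ((5 * (j + 1) : ℕ) : ZMod (5 * t + 1)) :
          ZMod (5 * t + 1) ⊕ ZMod (5 * t + 1))) '' Set.Iio t) ∪
       {Sum.inr ((5 * t + 1 : ℕ) : ZMod (5 * t + 1))}).ncard = 2 * t + 2 :=
  dominating_set_mod2_general t
end

section
/- In the Knödel graph W_{4,n} (n ≥ 16 even), every set S ⊆ U of size s dominates at most 4s vertices of V; moreover, if two vertices of S have index-distance in M_4 = {1,2,3,4,6,7} (or with n/2 minus that distance in M_4), then S dominates at most 4s - 1 vertices of V. -/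
/-!
The vertex `u_i` has the `Δ` neighbours `v_{i + 2^k - 1}`, `k < Δ`, so `N(S)` is the image of
`S × {0, …, Δ-1}` and has at most `Δ·|S|` elements. If `i ≡ j + (2^a - 2^b)` modulo `n/2`,
then `v_{i + 2^b - 1} = v_{j + 2^a - 1}`, so two of these `Δ·|S|` parametrised neighbours
coincide. For `Δ = 4` the differences `2^a - 2^b` form `M_4 = {1, 2, 3, 4, 6, 7}`, and indices
at index-distance `d` (or `n/2 - d`) differ by `±d` modulo `n/2`.
-/

open Finset

def knodelNeighbor (m i k : ℕ) : ZMod m ⊕ ZMod m :=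
  Sum.inr ((i : ZMod m) + 2 ^ k - 1)

section Knodel

variable {Δ m : ℕ}

theorem knodel_neighbors_eq_image (S : Finset ℕ) :
    {w : ZMod m ⊕ ZMod m | ∃ i ∈ S, (knodel Δ m).Adj (Sum.inl (i : ZMod m)) w} =
      ↑((S ×ˢ range Δ).image (Function.uncurry (knodelNeighbor m))) := by
  ext (x | j)
  · simp [knodel, knodelNeighbor]
  · simp only [Set.mem_ofPred_eq, knodel, coe_image, Set.mem_image, mem_coe, mem_product,
      mem_range, Prod.exists, Function.uncurry_apply_pair, knodelNeighbor, Sum.inr.injEq]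
    constructor
    · rintro ⟨i, hi, k, hk, rfl⟩
      exact ⟨i, k, ⟨hi, hk⟩, rfl⟩
    · rintro ⟨i, k, ⟨hi, hk⟩, rfl⟩
      exact ⟨i, hi, k, hk, rfl⟩

theorem ncard_knodel_neighbors_le (S : Finset ℕ) :
    {w : ZMod m ⊕ ZMod m | ∃ i ∈ S, (knodel Δ m).Adj (Sum.inl (i : ZMod m)) w}.ncard ≤
      Δ * S.card := by
  rw [knodel_neighbors_eq_image, Set.ncard_coe_finset]
  calc _ ≤ (S ×ˢ range Δ).card := card_image_le
    _ = Δ * S.card := by rw [card_product, card_range, mul_comm]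

theorem knodelNeighbor_eq_of_eq_add {i j a b : ℕ} (hba : b ≤ a)
    (h : (i : ZMod m) = j + (2 ^ a - 2 ^ b : ℕ)) :
    knodelNeighbor m i b = knodelNeighbor m j a := by
  rw [knodelNeighbor, knodelNeighbor, h, Nat.cast_sub (Nat.pow_le_pow_right two_pos hba)]
  push_cast
  ring_nf

theorem ncard_knodel_neighbors_lt_of_mem_Mset {S : Finset ℕ} {i j d : ℕ} (hi : i ∈ S)
    (hj : j ∈ S) (hd : d ∈ Mset Δ) (h : (i : ZMod m) = j + d) :
    {w : ZMod m ⊕ ZMod m | ∃ i ∈ S, (knodel Δ m).Adj (Sum.inl (i : ZMod m)) w}.ncard <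
      Δ * S.card := by
  obtain ⟨a, b, hba, haΔ, rfl⟩ := hd
  have hcollide : ¬ Set.InjOn (Function.uncurry (knodelNeighbor m)) ↑(S ×ˢ range Δ) := by
    intro hinj
    have hpair : (i, b) = (j, a) :=
      hinj (by simp [hi, hba.trans haΔ]) (by simp [hj, haΔ])
        (knodelNeighbor_eq_of_eq_add hba.le h)
    exact hba.ne (congrArg Prod.snd hpair)
  rw [knodel_neighbors_eq_image, Set.ncard_coe_finset]
  calc _ < (S ×ˢ range Δ).card :=
        card_image_le.lt_of_ne (fun hcard => hcollide (card_image_iff.1 hcard))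
    _ = Δ * S.card := by rw [card_product, card_range, mul_comm]

end Knodel

theorem Mset_four : Mset 4 = {1, 2, 3, 4, 6, 7} := by
  ext d
  simp only [Mset, Set.mem_ofPred_eq, Set.mem_insert_iff, Set.mem_singleton_iff]
  constructor
  · rintro ⟨a, b, hba, ha, rfl⟩
    interval_cases a <;> interval_cases b <;> simp
  · rintro (rfl | rfl | rfl | rfl | rfl | rfl)
    exacts [⟨1, 0, by norm_num⟩, ⟨2, 1, by norm_num⟩, ⟨2, 0, by norm_num⟩,
      ⟨3, 2, by norm_num⟩, ⟨3, 1, by norm_num⟩, ⟨3, 0, by norm_num⟩]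

theorem natCast_eq_add_or_of_idDist {m i j d : ℕ} (hi : i ≤ m) (hj : j ≤ m)
    (h : idDist m i j = d ∨ m - idDist m i j = d) :
    (i : ZMod m) = j + d ∨ (j : ZMod m) = i + d := by
  have hint :
      (i : ℤ) - j = d ∨ (j : ℤ) - i = d ∨ (i : ℤ) - j = d - m ∨ (j : ℤ) - i = d - m := by
    unfold idDist at h
    omega
  rw [← sub_eq_iff_eq_add', ← sub_eq_iff_eq_add']
  rcases hint with h | h | h | h
  all_goals
    have h := congrArg (Int.cast : ℤ → ZMod m) h
    push_cast [ZMod.natCast_self, sub_zero] at h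
  exacts [.inl h, .inr h, .inl h, .inr h]

theorem knodel_dominates_at_most_general (n : ℕ)
    (S : Finset ℕ) (hS : ∀ i ∈ S, 1 ≤ i ∧ i ≤ n / 2) :
    {w : ZMod (n / 2) ⊕ ZMod (n / 2) |
        ∃ i ∈ S, (knodel 4 (n / 2)).Adj (Sum.inl (i : ZMod (n / 2))) w}.ncard ≤
      4 * S.card ∧
    ((∃ i ∈ S, ∃ j ∈ S, i ≠ j ∧
        (idDist (n / 2) i j ∈ ({1, 2, 3, 4, 6, 7} : Set ℕ) ∨
         n / 2 - idDist (n / 2) i j ∈ ({1, 2, 3, 4, 6, 7} : Set ℕ))) →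
      {w : ZMod (n / 2) ⊕ ZMod (n / 2) |
          ∃ i ∈ S, (knodel 4 (n / 2)).Adj (Sum.inl (i : ZMod (n / 2))) w}.ncard ≤
        4 * S.card - 1) := by
  refine ⟨ncard_knodel_neighbors_le S, ?_⟩
  rintro ⟨i, hi, j, hj, -, hdist⟩
  obtain ⟨d, hd, hdist⟩ :
      ∃ d ∈ Mset 4, idDist (n / 2) i j = d ∨ n / 2 - idDist (n / 2) i j = d := by
    rw [Mset_four]
    rcases hdist with h | h
    exacts [⟨_, h, .inl rfl⟩, ⟨_, h, .inr rfl⟩]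
  have hlt := (natCast_eq_add_or_of_idDist (hS i hi).2 (hS j hj).2 hdist).elim
    (ncard_knodel_neighbors_lt_of_mem_Mset hi hj hd)
    (ncard_knodel_neighbors_lt_of_mem_Mset hj hi hd)
  omega

theorem knodel_dominates_at_most (n : ℕ) (hn : Even n) (h16 : 16 ≤ n)
    (S : Finset ℕ) (hS : ∀ i ∈ S, 1 ≤ i ∧ i ≤ n / 2) :
    {w : ZMod (n / 2) ⊕ ZMod (n / 2) |
        ∃ i ∈ S, (knodel 4 (n / 2)).Adj (Sum.inl (i : ZMod (n / 2))) w}.ncard ≤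
      4 * S.card ∧
    ((∃ i ∈ S, ∃ j ∈ S, i ≠ j ∧
        (idDist (n / 2) i j ∈ ({1, 2, 3, 4, 6, 7} : Set ℕ) ∨
         n / 2 - idDist (n / 2) i j ∈ ({1, 2, 3, 4, 6, 7} : Set ℕ))) →
      {w : ZMod (n / 2) ⊕ ZMod (n / 2) |
          ∃ i ∈ S, (knodel 4 (n / 2)).Adj (Sum.inl (i : ZMod (n / 2))) w}.ncard ≤
        4 * S.card - 1) :=
  knodel_dominates_at_most_general n S hS
end
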